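/- Let X be a bounded metric space and λ ≥ 0. Let ℓ, k : X → [0,∞) be lsc with inf ℓ = inf k = 0, and let u, v be the maximal (Perron) solutions of λ w + G[w] = ℓ and λ w + G[w] = k respectively. Then for every ρ > 0 and every x ∈ X: v(x) − u(x) ≤ (ρ + ‖k − ℓ‖_∞) · diam(X) + ‖k − ℓ‖_∞ · u(x)/ρ. -/

import Mathlib

/-!
Call `w` a subsolution of `λ w + G[w] = f` if `w x - w y ≤ (f x - λ w x) d(x, y)` for all
`x, y`. The pointwise supremum `W` of all subsolutions below `f · D` (with `D ≥ diam X`) is again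
one, and it is a solution: if `G[W](x) < f x - λ W x`, then `W` could be raised near `x` by a
narrow cone, which the lower semicontinuity of `f` keeps a subsolution, contradicting maximality.
Hence the Perron solution `u` dominates every subsolution of the `ℓ`-problem below `ℓ · D`.
With `ε = ‖k - ℓ‖_∞` and `C = (ρ + ε) diam X`, the function `(v - C)⁺ / (1 + ε/ρ)` is such a
subsolution: where `v > C` we have `k > ρ + ε`, so `ℓ > ρ` and `k ≤ ℓ + ε ≤ (1 + ε/ρ) ℓ`.
This gives `v - C ≤ (1 + ε/ρ) u`.
-/

open Filter Topology ENNReal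

/-- The global slope of a real-valued function `u` on a metric space:
`G[u](x) = sup_{y ≠ x} (u x - u y)⁺ / d(x,y)`, with values in `[0, ∞]`. -/
noncomputable def gslope {X : Type*} [MetricSpace X] (u : X → ℝ) (x : X) : ℝ≥0∞ :=
  ⨆ (y : X) (_ : y ≠ x), ENNReal.ofReal ((u x - u y) / dist x y)

/-- `w` is a solution of `λ w + G[w] = ℓ` with `inf w = 0`. -/
def IsSolution {X : Type*} [MetricSpace X] (lam : ℝ) (ℓ : X → ℝ) (w : X → ℝ) : Prop :=
  LowerSemicontinuous w ∧ (⨅ x, w x = 0) ∧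
    ∀ x, ((lam * w x : ℝ) : EReal) + (gslope w x : EReal) = (ℓ x : EReal)

/-- `w` is the Perron (pointwise maximal) solution of `λ w + G[w] = ℓ`. -/
def IsPerronSolution {X : Type*} [MetricSpace X] (lam : ℝ) (ℓ : X → ℝ) (w : X → ℝ) : Prop :=
  IsSolution lam ℓ w ∧ ∀ w' : X → ℝ, IsSolution lam ℓ w' → ∀ x, w' x ≤ w x

theorem EReal.coe_add_coe_ennreal_eq_coe_iff {a b : ℝ} {g : ℝ≥0∞} :
    (a : EReal) + g = b ↔ a ≤ b ∧ g = ENNReal.ofReal (b - a) := by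
  constructor
  · intro h
    have hg : g ≠ ⊤ := by
      rintro rfl
      simp at h
    rw [← EReal.coe_ennreal_toReal hg, ← EReal.coe_add, EReal.coe_eq_coe_iff] at h
    refine ⟨by linarith [ENNReal.toReal_nonneg (a := g)], ?_⟩
    rw [← h, _root_.add_sub_cancel_left, ENNReal.ofReal_toReal hg]
  · rintro ⟨hab, rfl⟩
    rw [EReal.coe_ennreal_ofReal, max_eq_left (_root_.sub_nonneg.2 hab), ← EReal.coe_add,
      add_sub_cancel]

theorem ENNReal.ofReal_le_add_mul_add_mul_div {a ρ ε D c : ℝ} (hρ : 0 < ρ) (hε : 0 ≤ ε)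
    (hD : 0 ≤ D) (hc : 0 ≤ c) (h : a ≤ (ρ + ε) * D + ε * c / ρ) :
    ENNReal.ofReal a ≤ (ENNReal.ofReal ρ + ENNReal.ofReal ε) * ENNReal.ofReal D +
      ENNReal.ofReal ε * ENNReal.ofReal c / ENNReal.ofReal ρ := by
  calc ENNReal.ofReal a ≤ ENNReal.ofReal ((ρ + ε) * D + ε * c / ρ) := ENNReal.ofReal_le_ofReal h
    _ = _ := by
      rw [ENNReal.ofReal_add (by positivity) (by positivity), ENNReal.ofReal_mul (by positivity),
        ENNReal.ofReal_add hρ.le hε, ENNReal.ofReal_div_of_pos hρ, ENNReal.ofReal_mul hε]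

theorem max_zero_sub_div_le_mul {v k ℓ ρ ε D : ℝ} (hvk : v ≤ k * D) (hkℓ : k ≤ ℓ + ε)
    (hℓ : 0 ≤ ℓ) (hρ : 0 < ρ) (hε : 0 ≤ ε) (hD : 0 ≤ D) :
    max 0 ((v - (ρ + ε) * D) / (1 + ε / ρ)) ≤ ℓ * D := by
  refine max_le (mul_nonneg hℓ hD) ?_
  rcases le_or_gt v ((ρ + ε) * D) with hv | hv
  · exact (div_nonpos_of_nonpos_of_nonneg (by linarith) (by positivity)).trans (mul_nonneg hℓ hD)
  refine (div_le_self (by linarith) (by simp; positivity)).trans ?_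
  nlinarith [mul_le_mul_of_nonneg_right hkℓ hD, mul_nonneg hρ.le hD]

section Perron

variable {X : Type*} [MetricSpace X] {lam D : ℝ} {f w W : X → ℝ}

def IsSubsolution (lam : ℝ) (f w : X → ℝ) : Prop :=
  ∀ x y, w x - w y ≤ (f x - lam * w x) * dist x y

theorem sub_le_mul_dist_of_gslope_le {c : ℝ} {x : X} (hc : 0 ≤ c)
    (h : gslope w x ≤ ENNReal.ofReal c) (y : X) : w x - w y ≤ c * dist x y := by
  rcases eq_or_ne y x with rfl | hyx
  · simp
  have hterm : ENNReal.ofReal ((w x - w y) / dist x y) ≤ gslope w x :=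
    le_iSup₂_of_le (f := fun y (_ : y ≠ x) => ENNReal.ofReal ((w x - w y) / dist x y)) y hyx le_rfl
  have hquot := hterm.trans h
  rwa [ENNReal.ofReal_le_ofReal_iff hc, div_le_iff₀ (dist_pos.2 hyx.symm)] at hquot

theorem IsSolution.isSubsolution (hw : IsSolution lam f w) : IsSubsolution lam f w := by
  intro x
  obtain ⟨hle, hslope⟩ := EReal.coe_add_coe_ennreal_eq_coe_iff.1 (hw.2.2 x)
  exact sub_le_mul_dist_of_gslope_le (by linarith) hslope.le

theorem IsSubsolution.gslope_le (hw : IsSubsolution lam f w) (x : X) :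
    gslope w x ≤ ENNReal.ofReal (f x - lam * w x) := by
  refine iSup₂_le fun y hyx => ENNReal.ofReal_le_ofReal ?_
  rw [div_le_iff₀ (dist_pos.2 hyx.symm)]
  exact hw x y

theorem IsSubsolution.lowerSemicontinuous (hw : IsSubsolution lam f w) :
    LowerSemicontinuous w := by
  intro x t ht
  have hcont : ContinuousAt (fun z => w x - (f x - lam * w x) * dist x z) x := by fun_prop
  filter_upwards [hcont.eventually (lt_mem_nhds (by simpa using ht))] with z hz
  linarith [hw x z]

theorem IsSubsolution.sup_of_lt {w₁ w₂ : X → ℝ} (h₁ : IsSubsolution lam f w₁)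
    (h₂ : ∀ x y, w₁ x < w₂ x → w₂ x - w₂ y ≤ (f x - lam * w₂ x) * dist x y) :
    IsSubsolution lam f (w₁ ⊔ w₂) := by
  intro x y
  simp only [Pi.sup_apply]
  rcases le_or_gt (w₂ x) (w₁ x) with h | h
  · rw [sup_eq_left.2 h]
    linarith [h₁ x y, le_sup_left (a := w₁ y) (b := w₂ y)]
  · rw [sup_eq_right.2 h.le]
    linarith [h₂ x y h, le_sup_right (a := w₁ y) (b := w₂ y)]

theorem IsSubsolution.ciSup {ι : Type*} [Nonempty ι] {w : ι → X → ℝ} (hlam : 0 ≤ lam)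
    (hw : ∀ i, IsSubsolution lam f (w i)) (hbdd : ∀ z, BddAbove (Set.range fun i => w i z)) :
    IsSubsolution lam f fun z => ⨆ i, w i z := by
  intro x y
  have hpos : 0 < 1 + lam * dist x y := by positivity
  suffices (⨆ i, w i x) ≤ ((⨆ i, w i y) + f x * dist x y) / (1 + lam * dist x y) by
    rw [le_div_iff₀ hpos] at this
    linarith
  refine ciSup_le fun i => (le_div_iff₀ hpos).2 ?_
  linarith [hw i x y, le_ciSup (hbdd y) i]

def perronClass (lam : ℝ) (f : X → ℝ) (D : ℝ) : Set (X → ℝ) :=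
  {w | IsSubsolution lam f w ∧ ∀ z, w z ≤ f z * D}

noncomputable def perronSup (lam : ℝ) (f : X → ℝ) (D : ℝ) (x : X) : ℝ :=
  ⨆ w : perronClass lam f D, (w : X → ℝ) x

theorem zero_mem_perronClass (hf : ∀ z, 0 ≤ f z) (hD : 0 ≤ D) : 0 ∈ perronClass lam f D :=
  ⟨fun x y => by simpa using mul_nonneg (hf x) dist_nonneg,
    fun z => by simpa using mul_nonneg (hf z) hD⟩

theorem perronClass_mono {D' : ℝ} (hf : ∀ z, 0 ≤ f z) (hDD : D ≤ D') :
    perronClass lam f D ⊆ perronClass lam f D' :=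
  fun _ hw => ⟨hw.1, fun z => (hw.2 z).trans (mul_le_mul_of_nonneg_left hDD (hf z))⟩

theorem isGreatest_perronSup (hlam : 0 ≤ lam) (hf : ∀ z, 0 ≤ f z) (hD : 0 ≤ D) :
    IsGreatest (perronClass lam f D) (perronSup lam f D) := by
  have : Nonempty (perronClass lam f D) := ⟨⟨0, zero_mem_perronClass hf hD⟩⟩
  have hbdd : ∀ z, BddAbove (Set.range fun w : perronClass lam f D => (w : X → ℝ) z) :=
    fun z => ⟨f z * D, by rintro _ ⟨w, rfl⟩; exact w.2.2 z⟩
  exact ⟨⟨IsSubsolution.ciSup hlam (fun w => w.2.1) hbdd, fun z => ciSup_le fun w => w.2.2 z⟩,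
    fun w hw z => le_ciSup (hbdd z) ⟨w, hw⟩⟩

theorem IsSubsolution.max_zero_sub_div {ℓ k v : X → ℝ} {ρ ε : ℝ} (hv : IsSubsolution lam k v)
    (hvk : ∀ z, v z ≤ k z * D) (hkℓ : ∀ z, k z ≤ ℓ z + ε) (hℓ : ∀ z, 0 ≤ ℓ z) (hlam : 0 ≤ lam)
    (hρ : 0 < ρ) (hε : 0 ≤ ε) (hD : 0 ≤ D) :
    IsSubsolution lam ℓ fun z => max 0 ((v z - (ρ + ε) * D) / (1 + ε / ρ)) := by
  intro x y
  dsimp only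
  set s := 1 + ε / ρ
  set C := (ρ + ε) * D
  have hs : 0 < s := by positivity
  have hy : v y - C ≤ s * max 0 ((v y - C) / s) := by
    rw [← div_le_iff₀' hs]
    exact le_max_right _ _
  rcases le_or_gt (v x) C with hx | hx
  · rw [max_eq_left (div_nonpos_of_nonpos_of_nonneg (by linarith) hs.le)]
    nlinarith [le_max_left 0 ((v y - C) / s), mul_nonneg (hℓ x) (dist_nonneg (x := x) (y := y))]
  -- where `v x > C` we have `ℓ x > ρ`, hence `k x ≤ ℓ x + ε ≤ s * ℓ x`
  have hkx : ρ + ε < k x := lt_of_mul_lt_mul_right (hx.trans_le (hvk x)) hD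
  have hks : k x ≤ s * ℓ x := by
    have : ε ≤ ε / ρ * ℓ x := by
      rw [div_mul_eq_mul_div, le_div_iff₀ hρ]
      nlinarith [hkℓ x]
    linarith [hkℓ x]
  rw [max_eq_right (div_nonneg (by linarith) hs.le)]
  refine le_of_mul_le_mul_left ?_ hs
  have hlhs : s * ((v x - C) / s - max 0 ((v y - C) / s)) =
      v x - C - s * max 0 ((v y - C) / s) := by
    field_simp
  have hrhs : s * ((ℓ x - lam * ((v x - C) / s)) * dist x y) =
      (s * ℓ x - lam * (v x - C)) * dist x y := by
    field_simp
  rw [hlhs, hrhs]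
  nlinarith [hv x y, mul_le_mul_of_nonneg_right hks (dist_nonneg (x := x) (y := y)),
    mul_nonneg (mul_nonneg hlam (by positivity : 0 ≤ C)) (dist_nonneg (x := x) (y := y))]

variable [Nonempty X]

theorem IsSubsolution.lam_mul_le (hw : IsSubsolution lam f w) (hw0 : ⨅ z, w z = 0)
    (hlam : 0 ≤ lam) (x : X) (hf : 0 ≤ f x) : lam * w x ≤ f x := by
  by_contra! hlt
  have hx : w x ≤ 0 := by
    refine le_of_forall_pos_le_add fun δ hδ => ?_
    obtain ⟨y, hy⟩ := exists_lt_of_ciInf_lt (hw0.trans_lt hδ)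
    nlinarith [hw x y, dist_nonneg (x := x) (y := y)]
  nlinarith

theorem IsSubsolution.le_mul (hw : IsSubsolution lam f w) (hw0 : ⨅ z, w z = 0)
    (hlam : 0 ≤ lam) (hf : ∀ z, 0 ≤ f z) (hdist : ∀ p q : X, dist p q ≤ D) (x : X) :
    w x ≤ f x * D := by
  rcases le_or_gt (w x) 0 with hx | hx
  · exact hx.trans (mul_nonneg (hf x) ((dist_nonneg).trans (hdist x x)))
  refine le_of_forall_pos_le_add fun δ hδ => ?_
  obtain ⟨y, hy⟩ := exists_lt_of_ciInf_lt (hw0.trans_lt hδ)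
  have h1 : (f x - lam * w x) * dist x y ≤ f x * dist x y := by
    nlinarith [mul_nonneg (mul_nonneg hlam hx.le) (dist_nonneg (x := x) (y := y))]
  have h2 : f x * dist x y ≤ f x * D := mul_le_mul_of_nonneg_left (hdist x y) (hf x)
  linarith [hw x y]

theorem IsGreatest.iInf_perronClass_eq_zero (hW : IsGreatest (perronClass lam f D) W)
    (hf : ∀ z, 0 ≤ f z) (hD : 0 ≤ D) (hinf : ⨅ z, f z = 0) : ⨅ z, W z = 0 := by
  have hW0 : ∀ z, 0 ≤ W z := hW.2 (zero_mem_perronClass hf hD)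
  refine le_antisymm ?_ (le_ciInf hW0)
  calc ⨅ z, W z ≤ ⨅ z, f z * D := ciInf_mono ⟨0, by rintro _ ⟨z, rfl⟩; exact hW0 z⟩ hW.1.2
    _ = 0 := by rw [← Real.iInf_mul_of_nonneg hD, hinf, zero_mul]

theorem IsGreatest.ofReal_le_gslope (hW : IsGreatest (perronClass lam f D) W)
    (hlam : 0 ≤ lam) (hf : ∀ z, 0 ≤ f z) (hflsc : LowerSemicontinuous f) (hD : 0 < D)
    (hdist : ∀ p q : X, dist p q ≤ D) (hW0 : ⨅ z, W z = 0) (x : X) :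
    ENNReal.ofReal (f x - lam * W x) ≤ gslope W x := by
  by_contra! hlt
  obtain ⟨B, hB0, hgB, hBc⟩ := ENNReal.lt_iff_exists_real_btwn.1 hlt
  have hBc : B < f x - lam * W x := (ENNReal.ofReal_lt_ofReal_iff_of_nonneg hB0).1 hBc
  have hslope : ∀ y, W x - W y ≤ B * dist x y := sub_le_mul_dist_of_gslope_le hB0 hgB.le
  have hWnonneg : ∀ z, 0 ≤ W z := hW.2 (zero_mem_perronClass hf hD.le)
  have hWx : W x ≤ B * D := by
    refine le_of_forall_pos_le_add fun δ hδ => ?_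
    obtain ⟨y, hy⟩ := exists_lt_of_ciInf_lt (hW0.trans_lt hδ)
    linarith [hslope y, mul_le_mul_of_nonneg_left (hdist x y) hB0]
  set θ := f x - lam * W x - B
  have hθ0 : 0 < θ := by linarith
  obtain ⟨r, hr, hfr⟩ := Metric.eventually_nhds_iff.1 (hflsc x (f x - θ / 4) (by linarith))
  obtain ⟨a, ha0, har, haD, hla⟩ :
      ∃ a, 0 < a ∧ a ≤ θ * r / 2 ∧ a ≤ θ * D / 2 ∧ lam * a ≤ θ / 4 := by
    refine ⟨min (min (θ * r / 2) (θ * D / 2)) (θ / (4 * (lam + 1))), by positivity,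
      (min_le_left _ _).trans (min_le_left _ _), (min_le_left _ _).trans (min_le_right _ _), ?_⟩
    calc lam * _ ≤ (lam + 1) * (θ / (4 * (lam + 1))) :=
          mul_le_mul (by linarith) (min_le_right _ _) (by positivity) (by positivity)
      _ = θ / 4 := by field_simp
  -- the cone is steeper than `W` at `x`, so it lies above `W` only inside `ball x r`
  obtain ⟨ψ, hψ⟩ : ∃ ψ : X → ℝ, ∀ z, ψ z = W x + a - (B + θ / 2) * dist x z := ⟨_, fun _ => rfl⟩
  have hψ_le : ∀ z, ψ z ≤ W x + a := fun z => by
    have := mul_nonneg (by linarith : 0 ≤ B + θ / 2) (dist_nonneg (x := x) (y := z))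
    linarith [hψ z]
  have hnear : ∀ z, W z < ψ z → f x - θ / 4 < f z := by
    intro z hz
    have h : θ / 2 * dist x z < a := by linarith [hslope z, hψ z]
    exact hfr (by rw [dist_comm]; nlinarith)
  have hmem : W ⊔ ψ ∈ perronClass lam f D := by
    refine ⟨hW.1.1.sup_of_lt fun z y hz => ?_, fun z => ?_⟩
    · have hcone : ψ z - ψ y ≤ (B + θ / 2) * dist z y := by
        nlinarith [dist_triangle x z y, hψ z, hψ y]
      have hslope_z : B + θ / 2 ≤ f z - lam * ψ z := by
        nlinarith [hnear z hz, mul_le_mul_of_nonneg_left (hψ_le z) hlam, hWnonneg x]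
      exact hcone.trans (mul_le_mul_of_nonneg_right hslope_z dist_nonneg)
    · rcases le_or_gt (ψ z) (W z) with hz | hz
      · simpa [sup_eq_left.2 hz] using hW.1.2 z
      · have hfz : B + θ / 2 ≤ f z := by nlinarith [hnear z hz, hWnonneg x]
        simp only [Pi.sup_apply, sup_eq_right.2 hz.le]
        nlinarith [hψ_le z, mul_le_mul_of_nonneg_right hfz hD.le]
  have hx := hW.2 hmem x
  rw [Pi.sup_apply, hψ, dist_self, mul_zero, sub_zero] at hx
  linarith [le_sup_right (a := W x) (b := W x + a)]

theorem IsGreatest.isSolution (hW : IsGreatest (perronClass lam f D) W) (hlam : 0 ≤ lam)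
    (hf : ∀ z, 0 ≤ f z) (hflsc : LowerSemicontinuous f) (hinf : ⨅ z, f z = 0) (hD : 0 < D)
    (hdist : ∀ p q : X, dist p q ≤ D) : IsSolution lam f W := by
  have hW0 := hW.iInf_perronClass_eq_zero hf hD.le hinf
  refine ⟨hW.1.1.lowerSemicontinuous, hW0, fun x =>
    EReal.coe_add_coe_ennreal_eq_coe_iff.2 ⟨hW.1.1.lam_mul_le hW0 hlam x (hf x), ?_⟩⟩
  exact le_antisymm (hW.1.1.gslope_le x) (hW.ofReal_le_gslope hlam hf hflsc hD hdist hW0 x)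

theorem IsPerronSolution.le_of_mem_perronClass {u : X → ℝ} (hu : IsPerronSolution lam f u)
    (hlam : 0 ≤ lam) (hf : ∀ z, 0 ≤ f z) (hflsc : LowerSemicontinuous f) (hinf : ⨅ z, f z = 0)
    (hdist : ∀ p q : X, dist p q ≤ D) (hw : w ∈ perronClass lam f D) (x : X) : w x ≤ u x := by
  have hD : 0 ≤ D := dist_self x ▸ hdist x x
  -- the cone argument behind `IsGreatest.isSolution` needs a positive bound
  have hW := isGreatest_perronSup (D := D + 1) hlam hf (by linarith)
  refine (hW.2 (perronClass_mono hf (by linarith) hw) x).trans (hu.2 _ ?_ x)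
  exact hW.isSolution hlam hf hflsc hinf (by linarith) fun p q => (hdist p q).trans (by linarith)

theorem IsPerronSolution.nonneg {u : X → ℝ} (hu : IsPerronSolution lam f u) (hlam : 0 ≤ lam)
    (hf : ∀ z, 0 ≤ f z) (hflsc : LowerSemicontinuous f) (hinf : ⨅ z, f z = 0)
    (hdist : ∀ p q : X, dist p q ≤ D) (x : X) : 0 ≤ u x :=
  hu.le_of_mem_perronClass hlam hf hflsc hinf hdist
    (zero_mem_perronClass hf (dist_self x ▸ hdist x x)) x

theorem IsPerronSolution.sub_le_of_le_add {ℓ k u v : X → ℝ} {ρ ε : ℝ}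
    (hu : IsPerronSolution lam ℓ u) (hv : IsSolution lam k v) (hlam : 0 ≤ lam)
    (hℓ : LowerSemicontinuous ℓ) (hℓ0 : ∀ z, 0 ≤ ℓ z) (hinfℓ : ⨅ z, ℓ z = 0)
    (hk0 : ∀ z, 0 ≤ k z) (hdist : ∀ p q : X, dist p q ≤ D) (hρ : 0 < ρ) (hε : 0 ≤ ε)
    (hkℓ : ∀ z, k z ≤ ℓ z + ε) (x : X) :
    v x - u x ≤ (ρ + ε) * D + ε * u x / ρ := by
  have hD : 0 ≤ D := dist_self x ▸ hdist x x
  have hvk := hv.isSubsolution.le_mul hv.2.1 hlam hk0 hdist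
  have hmem : (fun z => max 0 ((v z - (ρ + ε) * D) / (1 + ε / ρ))) ∈ perronClass lam ℓ D :=
    ⟨hv.isSubsolution.max_zero_sub_div hvk hkℓ hℓ0 hlam hρ hε hD, fun z =>
      max_zero_sub_div_le_mul (hvk z) (hkℓ z) (hℓ0 z) hρ hε hD⟩
  have hwu := (le_max_right _ _).trans (hu.le_of_mem_perronClass hlam hℓ0 hℓ hinfℓ hdist hmem x)
  rw [div_le_iff₀ (by positivity)] at hwu
  have : ε * u x / ρ = ε / ρ * u x := by ring
  linarith

end Perron

theorem perron_stability_estimate_general {X : Type*} [MetricSpace X] [Nonempty X]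
    (hX : Bornology.IsBounded (Set.univ : Set X))
    (lam : ℝ) (hlam : 0 ≤ lam)
    (ℓ k : X → ℝ) (hℓ : LowerSemicontinuous ℓ)
    (hℓ0 : ∀ x, 0 ≤ ℓ x) (hk0 : ∀ x, 0 ≤ k x)
    (hinfℓ : ⨅ x, ℓ x = 0)
    (u v : X → ℝ)
    (hu : IsPerronSolution lam ℓ u) (hv : IsPerronSolution lam k v) :
    ∀ ρ : ℝ, 0 < ρ → ∀ x,
      ENNReal.ofReal (v x - u x) ≤
        (ENNReal.ofReal ρ + ⨆ y, ENNReal.ofReal |k y - ℓ y|) *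
            ENNReal.ofReal (Metric.diam (Set.univ : Set X)) +
          (⨆ y, ENNReal.ofReal |k y - ℓ y|) * ENNReal.ofReal (u x) / ENNReal.ofReal ρ := by
  intro ρ hρ x
  set D := Metric.diam (Set.univ : Set X)
  set E := ⨆ y, ENNReal.ofReal |k y - ℓ y|
  have hdist : ∀ p q : X, dist p q ≤ D := fun p q => Metric.dist_le_diam_of_mem hX trivial trivial
  rcases le_or_gt (v x) (u x) with hvu | hvu
  · simp [ENNReal.ofReal_of_nonpos (sub_nonpos.2 hvu)]
  have hu0 : 0 ≤ u x := hu.nonneg hlam hℓ0 hℓ hinfℓ hdist x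
  rcases eq_or_ne E ⊤ with hE | hE
  · have hvk : v x ≤ k x * D := hv.1.isSubsolution.le_mul hv.1.2.1 hlam hk0 hdist x
    have hD : 0 < D := pos_of_mul_pos_right (hu0.trans_lt (hvu.trans_le hvk)) (hk0 x)
    simp [hE, ENNReal.top_mul (ENNReal.ofReal_pos.2 hD).ne']
  have hkℓ : ∀ z, k z ≤ ℓ z + E.toReal := fun z => by
    have := (ENNReal.ofReal_le_iff_le_toReal hE).1 (le_iSup (fun y => ENNReal.ofReal |k y - ℓ y|) z)
    linarith [le_abs_self (k z - ℓ z)]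
  rw [← ENNReal.ofReal_toReal hE]
  exact ENNReal.ofReal_le_add_mul_add_mul_div hρ ENNReal.toReal_nonneg Metric.diam_nonneg hu0
    (hu.sub_le_of_le_add hv.1 hlam hℓ hℓ0 hinfℓ hk0 hdist hρ ENNReal.toReal_nonneg hkℓ x)

/-- Stability estimate: if `u`, `v` are the Perron solutions of `λ w + G[w] = ℓ` and
`λ w + G[w] = k` on a bounded metric space, then for every `ρ > 0` and `x`,
`v x - u x ≤ (ρ + ‖k - ℓ‖_∞) diam X + ‖k - ℓ‖_∞ · u x / ρ`. -/
theorem perron_stability_estimate {X : Type*} [MetricSpace X] [Nonempty X]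
    (hX : Bornology.IsBounded (Set.univ : Set X))
    (lam : ℝ) (hlam : 0 ≤ lam)
    (ℓ k : X → ℝ) (hℓ : LowerSemicontinuous ℓ) (hk : LowerSemicontinuous k)
    (hℓ0 : ∀ x, 0 ≤ ℓ x) (hk0 : ∀ x, 0 ≤ k x)
    (hinfℓ : ⨅ x, ℓ x = 0) (hinfk : ⨅ x, k x = 0)
    (u v : X → ℝ)
    (hu : IsPerronSolution lam ℓ u) (hv : IsPerronSolution lam k v) :
    ∀ ρ : ℝ, 0 < ρ → ∀ x,
      ENNReal.ofReal (v x - u x) ≤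
        (ENNReal.ofReal ρ + ⨆ y, ENNReal.ofReal |k y - ℓ y|) *
            ENNReal.ofReal (Metric.diam (Set.univ : Set X)) +
          (⨆ y, ENNReal.ofReal |k y - ℓ y|) * ENNReal.ofReal (u x) / ENNReal.ofReal ρ :=
  perron_stability_estimate_general hX lam hlam ℓ k hℓ hℓ0 hk0 hinfℓ u v hu hv
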